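/- Let (G,ω) be a vertex-weighted graph with n vertices and total weight N. Then τ_{(G,ω)}(x) = (x-1)^{N-n} τ_G(x), where τ_G is the tree polynomial of the underlying unweighted graph. In particular, the largest power of (x-1) dividing τ_{(G,ω)} is exactly N-n. -/

import Mathlib

open Polynomial

noncomputable section
open scoped Classical

/-- The weighted chromatic symmetric function of a (vertex-weighted) finite simple graph,
as a formal power series in the variables `x_0, x_1, x_2, …`: the coefficient of a monomial
`d` is the number of proper colourings `κ : V → ℕ` such that for each colour `i`, the total
weight of vertices coloured `i` is `d i`. -/
def wcsf {V : Type} [Fintype V] (G : SimpleGraph V) (ω : V → ℕ) : MvPowerSeries ℕ ℚ :=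
  fun d => (Nat.card {κ : V → ℕ // (∀ u v, G.Adj u v → κ u ≠ κ v) ∧
    ∀ i : ℕ, ∑ v ∈ Finset.univ.filter (fun v => κ v = i), ω v = d i} : ℚ)

/-- The (unweighted) chromatic symmetric function. -/
def csf {V : Type} [Fintype V] (G : SimpleGraph V) : MvPowerSeries ℕ ℚ :=
  wcsf G (fun _ => 1)

/-- `XP μ` is the chromatic symmetric function of the disjoint union of paths whose sizes are
given by the multiset `μ` (the chromatic symmetric function is multiplicative over disjoint
unions). -/
def XP (μ : Multiset ℕ) : MvPowerSeries ℕ ℚ :=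
  (μ.map (fun m => csf (SimpleGraph.pathGraph m))).prod

/-- The power-sum symmetric function `p_n = Σ_i x_i^n`. -/
def psum (n : ℕ) : MvPowerSeries ℕ ℚ :=
  fun d => if ∃ i, d = Finsupp.single i n then 1 else 0

/-- The power-sum symmetric function `p_μ`. -/
def pp (μ : Multiset ℕ) : MvPowerSeries ℕ ℚ := (μ.map psum).prod

/-- `P` is the chromatic polynomial of `G`: `P(k)` counts proper `k`-colourings for all
positive integers `k`. -/
def IsChromaticPoly {V : Type} [Fintype V] (G : SimpleGraph V) (P : Polynomial ℚ) : Prop :=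
  ∀ k : ℕ, 0 < k → P.eval (k : ℚ) =
    Nat.card {c : V → Fin k // ∀ u v, G.Adj u v → c u ≠ c v}

/-- The polynomial `Σ_λ a_λ x^{ℓ(λ)}` built from coefficients `a` indexed by partitions of
`n`; when `a` gives the path-basis coefficients of `X_G` this is the tree polynomial `τ_G`,
and when `a` gives the power-sum coefficients it is the chromatic polynomial. -/
def basisPoly (n : ℕ) (a : n.Partition → ℚ) : Polynomial ℚ :=
  ∑ l : n.Partition, Polynomial.C (a l) * Polynomial.X ^ l.parts.card

/-! Put `x_0 = ⋯ = x_{k-1} = 1` and all other variables `0` in the degree-`M` part of a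
symmetric function (`evalOnes k M`). On `X_{(G,ω)}` this counts the proper `k`-colourings of `G`,
whatever the weights, and it is multiplicative on homogeneous factors. A path on `m` vertices has
`k (k-1)^(m-1)` proper colourings, so an expansion `X_{(G,ω)} = Σ a_λ X_{P_λ}` makes
`Σ a_λ Π_{m ∈ λ} x (x-1)^(m-1)` the chromatic polynomial of `G`, for every weighting of `G`.
The substitution `x = y/(y-1)` turns this polynomial into `(y-1)^(-N) τ_{(G,ω)}(y)`, which gives
the factorisation. The power of `x - 1` is exact because `τ_G(1)` is the leading coefficient of
the chromatic polynomial, which is `1` since the number of proper colourings lies between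
`k (k-1) ⋯ (k-n+1)` and `k^n`. -/

open SimpleGraph

namespace Polynomial

theorem eq_of_eval_natCast_eq {R : Type*} [CommRing R] [IsDomain R] [CharZero R] {P Q : R[X]}
    (h : ∀ k : ℕ, 0 < k → P.eval (k : R) = Q.eval (k : R)) : P = Q :=
  eq_of_infinite_eval_eq P Q <| Set.infinite_of_injective_forall_mem
    (f := fun k : ℕ => ((k + 1 : ℕ) : R)) (fun i j hij => by simpa using hij)
    fun k => h (k + 1) k.succ_pos

theorem degree_le_of_abs_eval_natCast_le {𝕜 : Type*} [NormedField 𝕜] [LinearOrder 𝕜]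
    [IsStrictOrderedRing 𝕜] [Archimedean 𝕜] [OrderTopology 𝕜] {P Q : 𝕜[X]}
    (h : ∀ k : ℕ, 0 < k → |P.eval (k : 𝕜)| ≤ |Q.eval (k : 𝕜)|) : P.degree ≤ Q.degree := by
  by_contra! hlt
  by_cases hQ : Q = 0
  · have hP : P = 0 := eq_of_eval_natCast_eq fun k hk => by simpa [hQ] using h k hk
    simp [hP, hQ] at hlt
  have hratio := ((abs_div_tendsto_atTop_atTop_of_degree_gt P Q hlt hQ).comp
    tendsto_natCast_atTop_atTop).eventually_gt_atTop 1
  obtain ⟨k, hk, hk0⟩ := (hratio.and (Filter.eventually_gt_atTop 0)).exists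
  have : |P.eval (k : 𝕜) / Q.eval (k : 𝕜)| ≤ 1 := by
    rw [abs_div]
    exact div_le_one_of_le₀ (h k hk0) (abs_nonneg _)
  exact absurd hk (not_lt.2 this)

end Polynomial

theorem descFactorial_le_natCard_proper {V : Type*} [Fintype V] (G : SimpleGraph V) (k : ℕ) :
    k.descFactorial (Fintype.card V) ≤
      Nat.card {c : V → Fin k // ∀ u v, G.Adj u v → c u ≠ c v} := by
  rw [← Fintype.card_fin k, ← Fintype.card_embedding_eq, ← Nat.card_eq_fintype_card,
    Fintype.card_fin]
  exact Nat.card_le_card_of_injective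
    (fun e => ⟨e, fun u v huv => e.injective.ne (G.ne_of_adj huv)⟩)
    fun e e' h => DFunLike.coe_injective (congrArg Subtype.val h)

theorem natCard_proper_le_pow {V : Type*} [Fintype V] (G : SimpleGraph V) (k : ℕ) :
    Nat.card {c : V → Fin k // ∀ u v, G.Adj u v → c u ≠ c v} ≤ k ^ Fintype.card V :=
  (Finite.card_subtype_le _).trans (by simp)

namespace IsChromaticPoly

variable {V : Type} [Fintype V] {G : SimpleGraph V} {P Q : ℚ[X]}

theorem unique (hP : IsChromaticPoly G P) (hQ : IsChromaticPoly G Q) : P = Q :=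
  eq_of_eval_natCast_eq fun k hk => (hP k hk).trans (hQ k hk).symm

theorem coeff_card (hP : IsChromaticPoly G P) : P.coeff (Fintype.card V) = 1 := by
  set n := Fintype.card V
  have hbound : ∀ k : ℕ, 0 < k →
      |(X ^ n - P).eval (k : ℚ)| ≤ |(X ^ n - descPochhammer ℚ n).eval (k : ℚ)| := by
    intro k hk
    have hlo : ((k.descFactorial n : ℕ) : ℚ) ≤ P.eval (k : ℚ) := by
      rw [hP k hk]
      exact_mod_cast descFactorial_le_natCard_proper G k
    have hup : P.eval (k : ℚ) ≤ (k : ℚ) ^ n := by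
      rw [hP k hk]
      exact_mod_cast natCard_proper_le_pow G k
    simp only [eval_sub, eval_pow, eval_X, descPochhammer_eval_eq_descFactorial]
    rw [abs_of_nonneg (by linarith), abs_of_nonneg (by linarith)]
    linarith
  have hdeg : (X ^ n - descPochhammer ℚ n).degree < (n : WithBot ℕ) := by
    have := degree_sub_lt_left (p := X ^ n) (q := descPochhammer ℚ n)
      (by rw [degree_X_pow, degree_eq_natDegree (monic_descPochhammer ℚ n).ne_zero,
        descPochhammer_natDegree]) (monic_X_pow n).ne_zero
      (by rw [(monic_X_pow n).leadingCoeff, (monic_descPochhammer ℚ n).leadingCoeff])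
    rwa [degree_X_pow] at this
  have := coeff_eq_zero_of_degree_lt ((degree_le_of_abs_eval_natCast_le hbound).trans_lt hdeg)
  rw [coeff_sub, coeff_X_pow_self] at this
  linarith

end IsChromaticPoly

def pathChromaticPoly (m : ℕ) : ℚ[X] := X * (X - 1) ^ (m - 1)

def partitionChromaticPoly (M : ℕ) (a : M.Partition → ℚ) : ℚ[X] :=
  ∑ l : M.Partition, C (a l) * (l.parts.map pathChromaticPoly).prod

theorem isMonicOfDegree_pathChromaticPoly {m : ℕ} (hm : 0 < m) :
    IsMonicOfDegree (pathChromaticPoly m) m := by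
  have := (isMonicOfDegree_X (R := ℚ)).mul ((isMonicOfDegree_X_sub_one (1 : ℚ)).pow (m - 1))
  rwa [map_one, one_mul, Nat.add_sub_cancel' hm] at this

theorem isMonicOfDegree_prod_pathChromaticPoly {μ : Multiset ℕ} (hμ : ∀ m ∈ μ, 0 < m) :
    IsMonicOfDegree (μ.map pathChromaticPoly).prod μ.sum := by
  induction μ using Multiset.induction_on with
  | empty => simp
  | cons m μ ih =>
    rw [Multiset.map_cons, Multiset.prod_cons, Multiset.sum_cons]
    exact (isMonicOfDegree_pathChromaticPoly (hμ m (Multiset.mem_cons_self m μ))).mul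
      (ih fun m' hm' => hμ m' (Multiset.mem_cons_of_mem hm'))

theorem coeff_partitionChromaticPoly (M : ℕ) (a : M.Partition → ℚ) :
    (partitionChromaticPoly M a).coeff M = ∑ l, a l := by
  rw [partitionChromaticPoly, finsetSum_coeff]
  refine Finset.sum_congr rfl fun l _ => ?_
  have h := isMonicOfDegree_prod_pathChromaticPoly fun m hm => l.parts_pos hm
  rw [l.parts_sum, isMonicOfDegree_iff] at h
  rw [coeff_C_mul, h.2, mul_one]

theorem pow_mul_eval_pathChromaticPoly {y : ℚ} (hy : y ≠ 1) {m : ℕ} (hm : 0 < m) :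
    (y - 1) ^ m * (pathChromaticPoly m).eval (y / (y - 1)) = y := by
  set x := y / (y - 1)
  have hxy : (y - 1) * x = y := mul_div_cancel₀ y (sub_ne_zero.2 hy)
  have hx : (y - 1) * (x - 1) = 1 := by rw [mul_sub, hxy]; ring
  obtain ⟨p, rfl⟩ := Nat.exists_eq_add_one_of_ne_zero hm.ne'
  simp only [pathChromaticPoly, eval_mul, eval_X, eval_pow, eval_sub, eval_one,
    Nat.add_sub_cancel]
  calc (y - 1) ^ (p + 1) * (x * (x - 1) ^ p) = ((y - 1) * x) * ((y - 1) * (x - 1)) ^ p := by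
        rw [mul_pow]; ring
    _ = y := by rw [hxy, hx, one_pow, mul_one]

theorem pow_mul_eval_prod_pathChromaticPoly {y : ℚ} (hy : y ≠ 1) {μ : Multiset ℕ}
    (hμ : ∀ m ∈ μ, 0 < m) :
    (y - 1) ^ μ.sum * (μ.map pathChromaticPoly).prod.eval (y / (y - 1)) = y ^ μ.card := by
  induction μ using Multiset.induction_on with
  | empty => simp
  | cons m μ ih =>
    rw [Multiset.map_cons, Multiset.prod_cons, Multiset.sum_cons, Multiset.card_cons, eval_mul,
      pow_add, mul_mul_mul_comm,
      pow_mul_eval_pathChromaticPoly hy (hμ m (Multiset.mem_cons_self m μ)),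
      ih fun m' hm' => hμ m' (Multiset.mem_cons_of_mem hm'), pow_succ, mul_comm]

theorem eval_basisPoly {y : ℚ} (hy : y ≠ 1) (M : ℕ) (a : M.Partition → ℚ) :
    (basisPoly M a).eval y = (y - 1) ^ M * (partitionChromaticPoly M a).eval (y / (y - 1)) := by
  rw [basisPoly, partitionChromaticPoly, eval_finsetSum, eval_finsetSum, Finset.mul_sum]
  refine Finset.sum_congr rfl fun l _ => ?_
  have h := pow_mul_eval_prod_pathChromaticPoly hy fun m hm => l.parts_pos hm
  rw [l.parts_sum] at h
  simp only [eval_mul, eval_C, eval_pow, eval_X]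
  rw [← h]; ring

theorem eval_one_basisPoly (M : ℕ) (a : M.Partition → ℚ) : (basisPoly M a).eval 1 = ∑ l, a l := by
  simp [basisPoly, eval_finsetSum]

theorem basisPoly_eq_mul_of_partitionChromaticPoly_eq {M m : ℕ} (hmM : m ≤ M)
    {a : M.Partition → ℚ} {b : m.Partition → ℚ}
    (h : partitionChromaticPoly M a = partitionChromaticPoly m b) :
    basisPoly M a = (X - 1) ^ (M - m) * basisPoly m b := by
  refine eq_of_infinite_eval_eq _ _ ((Set.finite_singleton 1).infinite_compl.mono fun y hy => ?_)
  rw [Set.mem_compl_singleton_iff] at hy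
  simp only [Set.mem_ofPred_eq, eval_mul, eval_pow, eval_sub, eval_X, eval_one,
    eval_basisPoly hy, h]
  rw [← Nat.sub_add_cancel hmM, pow_add, Nat.add_sub_cancel]
  ring

open MvPowerSeries in
def evalOnes (k M : ℕ) : MvPowerSeries ℕ ℚ →ₗ[ℚ] ℚ :=
  ∑ d ∈ Finset.finsuppAntidiag (Finset.range k) M, coeff d

open MvPowerSeries in
theorem evalOnes_apply (k M : ℕ) (F : MvPowerSeries ℕ ℚ) :
    evalOnes k M F = ∑ d ∈ Finset.finsuppAntidiag (Finset.range k) M, coeff d F :=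
  LinearMap.sum_apply _ _ _

theorem mem_finsuppAntidiag_iff_degree {s : Finset ℕ} {M : ℕ} {d : ℕ →₀ ℕ} :
    d ∈ Finset.finsuppAntidiag s M ↔ d.degree = M ∧ d.support ⊆ s :=
  Finset.mem_finsuppAntidiag'

open MvPowerSeries in
theorem evalOnes_mul {F G : MvPowerSeries ℕ ℚ} {M₁ : ℕ}
    (hF : ∀ d, coeff d F ≠ 0 → d.degree = M₁) (k M₂ : ℕ) :
    evalOnes k (M₁ + M₂) (F * G) = evalOnes k M₁ F * evalOnes k M₂ G := by
  simp only [evalOnes_apply, MvPowerSeries.coeff_mul]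
  rw [Finset.sum_sigma', Finset.sum_mul_sum, ← Finset.sum_product']
  symm
  refine Finset.sum_bij_ne_zero (fun pq _ _ => ⟨pq.1 + pq.2, pq⟩) ?_ ?_ ?_ fun _ _ _ => rfl
  · rintro ⟨p, q⟩ hpq -
    simp only [Finset.mem_product, mem_finsuppAntidiag_iff_degree] at hpq
    simp only [Finset.mem_sigma, mem_finsuppAntidiag_iff_degree, map_add, hpq.1.1, hpq.2.1,
      Finset.HasAntidiagonal.mem_antidiagonal, and_true, true_and]
    exact Finsupp.support_add.trans (Finset.union_subset hpq.1.2 hpq.2.2)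
  · rintro ⟨p, q⟩ - - ⟨p', q'⟩ - - h
    simpa using (Sigma.mk.inj_iff.1 h).2
  · rintro ⟨d, p, q⟩ hd hne
    simp only [Finset.mem_sigma, mem_finsuppAntidiag_iff_degree,
      Finset.HasAntidiagonal.mem_antidiagonal] at hd
    obtain ⟨⟨hdeg, hsupp⟩, rfl⟩ := hd
    have hp : p.degree = M₁ := hF p (left_ne_zero_of_mul hne)
    refine ⟨(p, q), ?_, hne, rfl⟩
    simp only [Finset.mem_product, mem_finsuppAntidiag_iff_degree]
    refine ⟨⟨hp, (Finsupp.support_mono le_self_add).trans hsupp⟩,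
      ⟨?_, (Finsupp.support_mono le_add_self).trans hsupp⟩⟩
    rw [map_add, hp] at hdeg
    omega

theorem natCard_subtype_eq_natCard_fin {V : Type} {k : ℕ} (p : (V → ℕ) → Prop)
    (hp : ∀ κ, p κ → ∀ v, κ v < k) :
    Nat.card {κ // p κ} = Nat.card {c : V → Fin k // p fun v => c v} :=
  Nat.card_congr
    { toFun := fun κ => ⟨fun v => ⟨κ.1 v, hp _ κ.2 v⟩, κ.2⟩
      invFun := fun c => ⟨_, c.2⟩
      left_inv := fun _ => rfl
      right_inv := fun _ => rfl }

section Colorings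

variable {V : Type} [Fintype V]

def colorWeight (ω κ : V → ℕ) : ℕ →₀ ℕ := ∑ v, Finsupp.single (κ v) (ω v)

theorem colorWeight_apply (ω κ : V → ℕ) (i : ℕ) :
    colorWeight ω κ i = ∑ v ∈ Finset.univ.filter (fun v => κ v = i), ω v := by
  simp [colorWeight, Finsupp.finsetSum_apply, Finsupp.single_apply, Finset.sum_filter]

theorem degree_colorWeight (ω κ : V → ℕ) : (colorWeight ω κ).degree = ∑ v, ω v := by
  simp [colorWeight, map_sum]

theorem support_colorWeight_subset (ω κ : V → ℕ) :
    (colorWeight ω κ).support ⊆ Finset.univ.image κ :=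
  Finsupp.support_finsetSum.trans <| Finset.biUnion_subset.2 fun v _ =>
    Finsupp.support_single_subset.trans <|
      Finset.singleton_subset_iff.2 (Finset.mem_image_of_mem κ (Finset.mem_univ v))

theorem coeff_wcsf (G : SimpleGraph V) (ω : V → ℕ) (d : ℕ →₀ ℕ) :
    MvPowerSeries.coeff d (wcsf G ω) =
      Nat.card {κ : V → ℕ // (∀ u v, G.Adj u v → κ u ≠ κ v) ∧ colorWeight ω κ = d} := by
  simp only [Finsupp.ext_iff, colorWeight_apply]
  rfl

theorem degree_eq_of_coeff_wcsf_ne_zero (G : SimpleGraph V) (ω : V → ℕ) {d : ℕ →₀ ℕ}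
    (hd : MvPowerSeries.coeff d (wcsf G ω) ≠ 0) : d.degree = ∑ v, ω v := by
  rw [coeff_wcsf, Nat.cast_ne_zero, Nat.card_ne_zero] at hd
  obtain ⟨⟨κ, -, rfl⟩⟩ := hd.1
  exact degree_colorWeight ω κ

theorem evalOnes_wcsf (G : SimpleGraph V) {ω : V → ℕ} (hω : ∀ v, 0 < ω v) (k : ℕ) :
    evalOnes k (∑ v, ω v) (wcsf G ω) =
      Nat.card {c : V → Fin k // ∀ u v, G.Adj u v → c u ≠ c v} := by
  set A := Finset.finsuppAntidiag (Finset.range k) (∑ v, ω v)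
  have hlt : ∀ d ∈ A, ∀ κ : V → ℕ, colorWeight ω κ = d → ∀ v, κ v < k := by
    intro d hd κ hκ v
    -- the colour of `v` carries weight `ω v > 0`, so it lies in the support of `d`
    rw [mem_finsuppAntidiag_iff_degree, ← hκ] at hd
    refine Finset.mem_range.1 (hd.2 (Finsupp.mem_support_iff.2 ?_))
    rw [colorWeight_apply]
    exact (Finset.sum_pos (fun u _ => hω u) ⟨v, by simp⟩).ne'
  have hmaps : ∀ c : V → Fin k, colorWeight ω (fun v => c v) ∈ A := fun c =>
    mem_finsuppAntidiag_iff_degree.2 ⟨degree_colorWeight ω _,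
      (support_colorWeight_subset ω _).trans fun i hi => by
        obtain ⟨v, -, rfl⟩ := Finset.mem_image.1 hi
        exact Finset.mem_range.2 (c v).isLt⟩
  have hfiber : ∀ d ∈ A,
      Nat.card {κ : V → ℕ // (∀ u v, G.Adj u v → κ u ≠ κ v) ∧ colorWeight ω κ = d} =
        Nat.card {c : V → Fin k //
          (∀ u v, G.Adj u v → c u ≠ c v) ∧ colorWeight ω (fun v => c v) = d} := by
    intro d hd
    rw [natCard_subtype_eq_natCard_fin _ fun κ hκ => hlt d hd κ hκ.2]
    simp [Fin.val_inj]
  simp only [evalOnes_apply, coeff_wcsf]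
  rw [Finset.sum_congr rfl fun d hd => congrArg Nat.cast (hfiber d hd), ← Nat.cast_sum]
  simp only [Nat.card_eq_fintype_card, Fintype.card_subtype]
  rw [Finset.card_eq_sum_card_fiberwise fun c _ => hmaps c]
  simp only [Finset.filter_filter]

end Colorings

theorem pathGraph_proper_iff {α : Type} {p : ℕ} (c : Fin (p + 1) → α) :
    (∀ u v, (pathGraph (p + 1)).Adj u v → c u ≠ c v) ↔ ∀ i : Fin p, c i.castSucc ≠ c i.succ := by
  refine ⟨fun h i => h _ _ (pathGraph_adj.2 (Or.inl (by simp))), fun h u v huv => ?_⟩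
  rcases pathGraph_adj.1 huv with e | e
  · convert h ⟨u, by omega⟩ using 2 <;> ext <;> simp [e]
  · convert (h ⟨v, by omega⟩).symm using 2 <;> ext <;> simp [e]

theorem pathGraph_proper_snoc_iff {α : Type} {p : ℕ} (c : Fin (p + 1) → α) (j : α) :
    (∀ u v, (pathGraph (p + 2)).Adj u v →
        (Fin.snoc c j : Fin (p + 2) → α) u ≠ (Fin.snoc c j : Fin (p + 2) → α) v) ↔
      (∀ u v, (pathGraph (p + 1)).Adj u v → c u ≠ c v) ∧ c (Fin.last p) ≠ j := by
  rw [pathGraph_proper_iff, pathGraph_proper_iff, Fin.forall_fin_succ']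
  simp only [Fin.succ_castSucc, Fin.succ_last, Fin.snoc_castSucc, Fin.snoc_last]

theorem natCard_proper_pathGraph (k p : ℕ) :
    Nat.card {c : Fin (p + 1) → Fin k // ∀ u v, (pathGraph (p + 1)).Adj u v → c u ≠ c v} =
      k * (k - 1) ^ p := by
  induction p with
  | zero => simp
  | succ p ih =>
    set Q := fun c : Fin (p + 1) → Fin k => ∀ u v, (pathGraph (p + 1)).Adj u v → c u ≠ c v
    have e : {c : Fin (p + 2) → Fin k // ∀ u v, (pathGraph (p + 2)).Adj u v → c u ≠ c v} ≃
        Σ c : Fin (p + 1) → Fin k, {j // Q c ∧ c (Fin.last p) ≠ j} :=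
      ((Fin.snocEquiv fun _ => Fin k).symm.subtypeEquiv fun c => by
        conv_lhs => rw [← Fin.snoc_init_self c]
        exact pathGraph_proper_snoc_iff _ _).trans
      (((Equiv.prodComm _ _).subtypeEquiv fun _ => Iff.rfl).trans
        (Equiv.subtypeProdEquivSigmaSubtype fun c j => Q c ∧ c (Fin.last p) ≠ j))
    have hfiber : ∀ c, Nat.card {j // Q c ∧ c (Fin.last p) ≠ j} = if Q c then k - 1 else 0 := by
      intro c
      split_ifs with hc <;> simp [hc]
    rw [Nat.card_congr e, Nat.card_sigma, Finset.sum_congr rfl fun c _ => hfiber c,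
      Finset.sum_ite, Finset.sum_const_zero, add_zero, Finset.sum_const, smul_eq_mul,
      ← Fintype.card_subtype, ← Nat.card_eq_fintype_card, ih]
    ring

theorem evalOnes_csf_pathGraph {k m : ℕ} (hk : 0 < k) (hm : 0 < m) :
    evalOnes k m (csf (pathGraph m)) = (pathChromaticPoly m).eval (k : ℚ) := by
  obtain ⟨p, rfl⟩ := Nat.exists_eq_add_one_of_ne_zero hm.ne'
  have h := evalOnes_wcsf (pathGraph (p + 1)) (ω := fun _ => 1) (fun _ => one_pos) k
  simp only [Finset.sum_const, Finset.card_univ, Fintype.card_fin, smul_eq_mul, mul_one] at h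
  rw [csf, h, natCard_proper_pathGraph]
  simp [pathChromaticPoly, Nat.cast_sub hk]

theorem evalOnes_XP {k : ℕ} (hk : 0 < k) {μ : Multiset ℕ} (hμ : ∀ m ∈ μ, 0 < m) :
    evalOnes k μ.sum (XP μ) = (μ.map pathChromaticPoly).prod.eval (k : ℚ) := by
  induction μ using Multiset.induction_on with
  | empty => simp [evalOnes_apply, XP]
  | cons m μ ih =>
    have hm := hμ m (Multiset.mem_cons_self m μ)
    have hdeg : ∀ d, MvPowerSeries.coeff d (csf (pathGraph m)) ≠ 0 → d.degree = m :=
      fun d hd => by simpa using degree_eq_of_coeff_wcsf_ne_zero _ _ hd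
    rw [XP, Multiset.map_cons, Multiset.prod_cons, Multiset.sum_cons, evalOnes_mul hdeg,
      evalOnes_csf_pathGraph hk hm, ← XP, ih fun m' hm' => hμ m' (Multiset.mem_cons_of_mem hm'),
      Multiset.map_cons, Multiset.prod_cons, eval_mul]

theorem isChromaticPoly_partitionChromaticPoly {V : Type} [Fintype V] (G : SimpleGraph V)
    {ω : V → ℕ} (hω : ∀ v, 0 < ω v) {M : ℕ} (hM : ∑ v, ω v = M) {a : M.Partition → ℚ}
    (h : wcsf G ω = ∑ l : M.Partition, a l • XP l.parts) :
    IsChromaticPoly G (partitionChromaticPoly M a) := by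
  intro k hk
  rw [← evalOnes_wcsf G hω k, hM, h, map_sum, partitionChromaticPoly, eval_finsetSum]
  refine Finset.sum_congr rfl fun l _ => ?_
  rw [map_smul, smul_eq_mul, eval_mul, eval_C, ← evalOnes_XP hk fun m hm => l.parts_pos hm,
    l.parts_sum]

/-- for a vertex-weighted graph `(G,ω)` with `n` vertices and total weight
`N`, the tree polynomial satisfies `τ_{(G,ω)}(x) = (x-1)^{N-n} τ_G(x)`; in particular the
largest power of `(x-1)` dividing `τ_{(G,ω)}` is exactly `N - n`. -/
theorem stmt_15 {V : Type} [Fintype V] (G : SimpleGraph V) (ω : V → ℕ)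
    (hω : ∀ v, 0 < ω v) (n N : ℕ) (hn : Fintype.card V = n) (hN : ∑ v, ω v = N)
    (a : N.Partition → ℚ) (ha : wcsf G ω = ∑ l : N.Partition, a l • XP l.parts)
    (b : n.Partition → ℚ) (hb : csf G = ∑ l : n.Partition, b l • XP l.parts) :
    basisPoly N a = (Polynomial.X - 1) ^ (N - n) * basisPoly n b ∧
      (Polynomial.X - 1) ^ (N - n) ∣ basisPoly N a ∧
      ¬ (Polynomial.X - 1) ^ (N - n + 1) ∣ basisPoly N a := by
  have hnN : n ≤ N := calc
    n = ∑ _v : V, 1 := by simp [hn]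
    _ ≤ N := hN ▸ Finset.sum_le_sum fun v _ => hω v
  have hPa := isChromaticPoly_partitionChromaticPoly G hω hN ha
  have hPb := isChromaticPoly_partitionChromaticPoly G (ω := fun _ => 1) (fun _ => one_pos)
    (by simp [hn]) hb
  have hτ := basisPoly_eq_mul_of_partitionChromaticPoly_eq hnN (hPa.unique hPb)
  have hτ1 : (basisPoly n b).eval 1 = 1 := by
    have h := hPb.coeff_card
    rw [hn, coeff_partitionChromaticPoly] at h
    rw [eval_one_basisPoly, h]
  refine ⟨hτ, hτ ▸ dvd_mul_right _ _, fun hdvd => ?_⟩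
  have hX : (X - 1 : ℚ[X]) ≠ 0 := X_sub_C_ne_zero 1
  rw [hτ, pow_succ, mul_dvd_mul_iff_left (pow_ne_zero _ hX), ← C_1, dvd_iff_isRoot, IsRoot,
    hτ1] at hdvd
  exact one_ne_zero hdvd
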